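/- arXiv:2507.09170 — 2 statements merged into one kernel-verified Lean document; each statement's English description precedes it below -/
import Mathlib

section
/- Let $\phi \in L^\infty(\mathbb{C}^{m+n})$, $\mathbf{k} \in \mathbb{Z}_{\geq 0}^m$, $\mathbf{j} \in \mathbb{Z}_{>0}^m$, and $i \in \{1,\dots,m\}$. Let $B = \{\mathbf{z} \in \mathbb{C}^{m+n} : \sup_l |z_l| \leq 1\}$ and $S^{\mathbf{j}}_\delta = \{\mathbf{z} \in B : |\mathbf{z}^{\mathbf{j}}| = \delta\}$ where $\mathbf{z}^{\mathbf{j}} = z_1^{j_1}\cdots z_m^{j_m}$. Then $\lim_{\delta \to 0} \int_{S^{\mathbf{j}}_\delta} \phi(\mathbf{z},\bar{\mathbf{z}}) \prod_{l=1}^m (\ln|z_l|^2)^{k_l}\, dz_i \wedge d\mathbf{z}_{\hat{i}} \wedge d\bar{\mathbf{z}}_{\hat{i}} = 0$, and similarly with $d\bar{z}_i$ in place of $dz_i$. -/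
/-!
Near a point of `S^𝐣_δ` whose smallest modulus is `|z_a|`, one has `|z_a| ≤ ρ := δ^(1/J)` with
`J = ∑ j`, and the point is determined by its angles, by the log-moduli `-log |z_c| ∈ [0, L]`
(`c ≠ a`, `L = -log δ`) and by its last `n` coordinates. Rescaling the `a`-th angle by `ρ` turns
this into a `(J + 2)`-Lipschitz chart on a box of volume `O(ρ L^(2(m+n)-2))`, so
`μH[2(m+n)-1] S^𝐣_δ = O(δ^(1/J) |log δ|^(2(m+n)-2))`. On `S^𝐣_δ` all `|z_b|` lie in `[δ, 1]`, so
the integrand is `O(|log δ|^(∑ k))`, and the product tends to `0`.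
-/

open scoped Topology NNReal ENNReal
open Set MeasureTheory Complex Filter

theorem Real.abs_exp_sub_exp_le_exp_mul {x y c : ℝ} (hx : x ≤ c) (hy : y ≤ c) :
    |Real.exp x - Real.exp y| ≤ Real.exp c * |x - y| := by
  wlog hyx : y ≤ x generalizing x y
  · rw [abs_sub_comm, abs_sub_comm x]
    exact this hy hx (le_of_not_ge hyx)
  rw [abs_of_nonneg (sub_nonneg.2 (Real.exp_le_exp.2 hyx)), abs_of_nonneg (sub_nonneg.2 hyx)]
  calc Real.exp x - Real.exp y = Real.exp x * (1 - Real.exp (y - x)) := by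
        rw [mul_sub, mul_one, ← Real.exp_add]; ring_nf
    _ ≤ Real.exp c * (x - y) :=
        mul_le_mul (Real.exp_le_exp.2 hx) (by linarith [Real.add_one_le_exp (y - x)])
          (sub_nonneg.2 (Real.exp_le_one_iff.2 (by linarith))) (Real.exp_pos c).le

theorem Real.abs_min_exp_sub_min_exp_le {ρ : ℝ} (hρ : 0 < ρ) (x y : ℝ) :
    |min ρ (Real.exp x) - min ρ (Real.exp y)| ≤ ρ * |x - y| := by
  have hmin : ∀ t, min ρ (Real.exp t) = Real.exp (min (Real.log ρ) t) := fun t => by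
    rw [Real.exp_monotone.map_min, Real.exp_log hρ]
  rw [hmin, hmin]
  calc _ ≤ Real.exp (Real.log ρ) * |min (Real.log ρ) x - min (Real.log ρ) y| :=
        Real.abs_exp_sub_exp_le_exp_mul (min_le_left _ _) (min_le_left _ _)
    _ ≤ ρ * |x - y| := by
        rw [Real.exp_log hρ]
        refine mul_le_mul_of_nonneg_left ?_ hρ.le
        simpa using abs_min_sub_min_le_max (Real.log ρ) x (Real.log ρ) y

theorem Complex.dist_ofReal_mul_exp_le (r s α β : ℝ) (hs : 0 ≤ s) :
    dist (r * exp (α * I)) (s * exp (β * I)) ≤ dist r s + s * dist α β := by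
  have hsplit : (r : ℂ) * exp (α * I) - s * exp (β * I)
      = (r - s) * exp (α * I) + s * exp (β * I) * (exp (I * ↑(α - β)) - 1) := by
    rw [mul_sub, mul_assoc, ← Complex.exp_add]; push_cast; ring_nf
  rw [dist_eq_norm, hsplit]
  refine (norm_add_le _ _).trans (add_le_add ?_ ?_)
  · rw [norm_mul, norm_exp_ofReal_mul_I, mul_one, ← ofReal_sub, norm_real, Real.dist_eq,
      Real.norm_eq_abs]
  · rw [norm_mul, norm_mul, norm_exp_ofReal_mul_I, mul_one, norm_real, Real.norm_of_nonneg hs,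
      Real.dist_eq]
    gcongr
    exact Real.norm_exp_I_mul_ofReal_sub_one_le

theorem tendsto_neg_log_add_pow_mul_exp_log_div_nhdsGT_zero (N : ℕ) (c : ℝ) {J : ℝ}
    (hJ : 0 < J) :
    Tendsto (fun δ => (-Real.log δ + c) ^ N * Real.exp (Real.log δ / J)) (𝓝[>] 0) (𝓝 0) := by
  have hatTop : Tendsto (fun t => (t + c) ^ N * Real.exp (-t / J)) atTop (𝓝 0) := by
    have h := (Real.tendsto_pow_mul_exp_neg_atTop_nhds_zero N).comp
      ((tendsto_atTop_add_const_right _ c tendsto_id).atTop_div_const hJ)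
    convert h.const_mul (J ^ N * Real.exp (c / J)) using 1
    · funext t
      simp only [Function.comp, id, div_pow]
      rw [show -((t + c) / J) = -(t / J) + -(c / J) by ring, Real.exp_add, Real.exp_neg (c / J)]
      field_simp
    · simp
  simpa [Function.comp_def] using
    hatTop.comp (tendsto_neg_atBot_atTop.comp Real.tendsto_log_nhdsGT_zero)

def monomialSurface (m n : ℕ) (j : Fin m → ℕ) (δ : ℝ) : Set (Fin (m + n) → ℂ) :=
  {z | (∀ a, ‖z a‖ ≤ 1) ∧ ‖∏ a : Fin m, z (Fin.castAdd n a) ^ j a‖ = δ}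

section monomialSurface

variable {m n : ℕ} {j : Fin m → ℕ} {δ : ℝ} {z : Fin (m + n) → ℂ}

theorem prod_norm_pow_of_mem_monomialSurface (hz : z ∈ monomialSurface m n j δ) :
    ∏ b, ‖z (Fin.castAdd n b)‖ ^ j b = δ := by
  simpa only [norm_prod, norm_pow] using hz.2

theorem le_norm_of_mem_monomialSurface (hj : ∀ b, 0 < j b) (hz : z ∈ monomialSurface m n j δ)
    (b : Fin m) : δ ≤ ‖z (Fin.castAdd n b)‖ := by
  have hrest : ∏ c : {c // c ≠ b}, ‖z (Fin.castAdd n c)‖ ^ j c ≤ 1 :=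
    Finset.prod_le_one (fun _ _ => by positivity)
      (fun c _ => pow_le_one₀ (norm_nonneg _) (hz.1 _))
  calc δ = ‖z (Fin.castAdd n b)‖ ^ j b * ∏ c : {c // c ≠ b}, ‖z (Fin.castAdd n c)‖ ^ j c := by
        rw [← prod_norm_pow_of_mem_monomialSurface hz, Fintype.prod_eq_mul_prod_subtype_ne _ b]
    _ ≤ ‖z (Fin.castAdd n b)‖ ^ j b := mul_le_of_le_one_right (by positivity) hrest
    _ ≤ ‖z (Fin.castAdd n b)‖ := pow_le_of_le_one (norm_nonneg _) (hz.1 _) (hj b).ne'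

theorem sum_mul_log_norm_of_mem_monomialSurface (hj : ∀ b, 0 < j b) (hδ : 0 < δ)
    (hz : z ∈ monomialSurface m n j δ) :
    ∑ b, (j b : ℝ) * Real.log ‖z (Fin.castAdd n b)‖ = Real.log δ := by
  have hne : ∀ b, ‖z (Fin.castAdd n b)‖ ^ j b ≠ 0 := fun b =>
    pow_ne_zero _ (hδ.trans_le (le_norm_of_mem_monomialSurface hj hz b)).ne'
  rw [← prod_norm_pow_of_mem_monomialSurface hz, Real.log_prod fun b _ => hne b]
  simp only [Real.log_pow]

theorem abs_log_normSq_le_of_mem_monomialSurface (hj : ∀ b, 0 < j b) (hδ : 0 < δ)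
    (hz : z ∈ monomialSurface m n j δ) (b : Fin m) :
    |Real.log (normSq (z (Fin.castAdd n b)))| ≤ 2 * -Real.log δ := by
  have hlog_le := Real.log_le_log hδ (le_norm_of_mem_monomialSurface hj hz b)
  have hlog_nonpos := Real.log_nonpos (norm_nonneg _) (hz.1 (Fin.castAdd n b))
  rw [normSq_eq_norm_sq, Real.log_pow, abs_of_nonpos (by push_cast; linarith)]
  push_cast
  linarith

theorem norm_prod_log_normSq_pow_le_of_mem_monomialSurface {z : Fin (m + n) → ℂ}
    (hj : ∀ b, 0 < j b) (hδ : 0 < δ) (hz : z ∈ monomialSurface m n j δ) (k : Fin m → ℕ) :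
    ‖∏ b, (Real.log (normSq (z (Fin.castAdd n b))) : ℂ) ^ k b‖ ≤ (2 * -Real.log δ) ^ ∑ b, k b := by
  rw [norm_prod, ← Finset.prod_pow_eq_pow_sum]
  refine Finset.prod_le_prod (fun _ _ => norm_nonneg _) fun b _ => ?_
  rw [norm_pow, norm_real, Real.norm_eq_abs]
  exact pow_le_pow_left₀ (abs_nonneg _) (abs_log_normSq_le_of_mem_monomialSurface hj hδ hz b) _

theorem exists_log_norm_le_of_mem_monomialSurface (hm : 0 < m) (hj : ∀ b, 0 < j b) (hδ : 0 < δ)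
    (hz : z ∈ monomialSurface m n j δ) :
    ∃ a, Real.log ‖z (Fin.castAdd n a)‖ ≤ Real.log δ / ∑ b, (j b : ℝ) := by
  obtain ⟨a, -, ha⟩ := Finset.exists_min_image Finset.univ (fun b => ‖z (Fin.castAdd n b)‖)
    ⟨⟨0, hm⟩, Finset.mem_univ _⟩
  have hJ : (0 : ℝ) < ∑ b, (j b : ℝ) := by
    exact_mod_cast Finset.sum_pos (fun b _ => hj b) ⟨⟨0, hm⟩, Finset.mem_univ _⟩
  refine ⟨a, (le_div_iff₀ hJ).2 ?_⟩
  rw [← sum_mul_log_norm_of_mem_monomialSurface hj hδ hz, Finset.mul_sum]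
  refine Finset.sum_le_sum fun b _ => ?_
  rw [mul_comm]
  exact mul_le_mul_of_nonneg_left (Real.log_le_log (hδ.trans_le
    (le_norm_of_mem_monomialSurface hj hz a)) (ha b (Finset.mem_univ _))) (Nat.cast_nonneg _)

end monomialSurface

abbrev ChartIndex (m n : ℕ) (a : Fin m) : Type :=
  Fin m ⊕ (Fin n ⊕ Fin n) ⊕ {b : Fin m // b ≠ a}

section Chart

variable {m n : ℕ} (j : Fin m → ℕ) (a : Fin m)

noncomputable def chartExponent (L : ℝ) (u : {c : Fin m // c ≠ a} → ℝ) : ℝ :=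
  (∑ c : {c // c ≠ a}, j c * u c - L) / j a

/-- Coordinates: the angles of `z_b` (the `a`-th one multiplied by `ρ`), real and imaginary parts of
the last `n` coordinates, and `u_c = -log |z_c|` for `c ≠ a`; `|z_a|` is then fixed by
`|𝐳^𝐣| = δ`, `L = -log δ`. Clipping the moduli by `min ρ` and `min 1` makes the chart globally
Lipschitz. -/
noncomputable def chart (ρ L : ℝ) (p : ChartIndex m n a → ℝ) : Fin (m + n) → ℂ :=
  Fin.append
    (fun b => if h : b = a then
        ↑(min ρ (Real.exp (chartExponent j a L fun c => p (.inr (.inr c))))) *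
          exp (↑(p (.inl a) / ρ) * I)
      else ↑(min 1 (Real.exp (-p (.inr (.inr ⟨b, h⟩))))) * exp (↑(p (.inl b)) * I))
    (fun c => ⟨p (.inr (.inl (.inl c))), p (.inr (.inl (.inr c)))⟩)

noncomputable def chartCoords (ρ : ℝ) (z : Fin (m + n) → ℂ) : ChartIndex m n a → ℝ :=
  Sum.elim (fun b => if b = a then ρ * arg (z (Fin.castAdd n a)) else arg (z (Fin.castAdd n b)))
    (Sum.elim (Sum.elim (fun c => (z (Fin.natAdd m c)).re) (fun c => (z (Fin.natAdd m c)).im))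
      (fun c => -Real.log ‖z (Fin.castAdd n c)‖))

noncomputable def chartBox (ρ L : ℝ) : Set (ChartIndex m n a → ℝ) :=
  let w : ChartIndex m n a → ℝ := fun i => if i = .inl a then Real.pi * ρ else L + 4
  Icc (-w) w

theorem card_chartIndex : Fintype.card (ChartIndex m n a) = 2 * (m + n) - 1 := by
  have := a.pos
  simp only [Fintype.card_sum, Fintype.card_fin, Fintype.card_subtype_compl,
    Fintype.card_subtype_eq]
  omega

theorem volume_chartBox (ρ L : ℝ) :
    volume (chartBox (n := n) a ρ L) =
      ENNReal.ofReal (2 * (Real.pi * ρ)) * ENNReal.ofReal (2 * (L + 4)) ^ (2 * (m + n) - 2) := by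
  rw [chartBox, Real.volume_Icc_pi, ← Finset.mul_prod_erase _ _ (Finset.mem_univ (.inl a))]
  congr 1
  · simp only [Pi.neg_apply, if_pos, sub_neg_eq_add, two_mul]
  · rw [Finset.prod_congr rfl fun i hi => by rw [Pi.neg_apply, if_neg (Finset.ne_of_mem_erase hi),
      sub_neg_eq_add, ← two_mul], Finset.prod_const, Finset.card_erase_of_mem (Finset.mem_univ _),
      Finset.card_univ, card_chartIndex]
    rw [Nat.sub_sub]

theorem chartCoords_mem_chartBox {δ ρ : ℝ} {z : Fin (m + n) → ℂ} (hj : ∀ b, 0 < j b)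
    (hδ : 0 < δ) (hρ : 0 ≤ ρ) (hz : z ∈ monomialSurface m n j δ) :
    chartCoords a ρ z ∈ chartBox a ρ (-Real.log δ) := by
  have hL : 0 ≤ -Real.log δ := by
    linarith [Real.log_le_log hδ (le_norm_of_mem_monomialSurface hj hz a),
      Real.log_nonpos (norm_nonneg _) (hz.1 (Fin.castAdd n a))]
  have hπ := Real.pi_lt_four
  suffices ∀ i, |chartCoords a ρ z i| ≤ if i = .inl a then Real.pi * ρ else -Real.log δ + 4 from
    ⟨fun i => (abs_le.1 (this i)).1, fun i => (abs_le.1 (this i)).2⟩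
  rintro (b | (c | c) | c)
  · simp only [chartCoords, Sum.elim_inl, Sum.inl.injEq]
    split_ifs with hb
    · subst hb; rw [abs_mul, abs_of_nonneg hρ, mul_comm]
      exact mul_le_mul_of_nonneg_right (abs_arg_le_pi _) hρ
    · exact (abs_arg_le_pi _).trans (by linarith)
  · simp only [chartCoords, Sum.elim_inr, Sum.elim_inl, reduceCtorEq, if_false]
    linarith [(abs_re_le_norm _).trans (hz.1 (Fin.natAdd m c))]
  · simp only [chartCoords, Sum.elim_inr, Sum.elim_inl, reduceCtorEq, if_false]
    linarith [(abs_im_le_norm _).trans (hz.1 (Fin.natAdd m c))]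
  · simp only [chartCoords, Sum.elim_inr, reduceCtorEq, if_false]
    have hlog_le := Real.log_le_log hδ (le_norm_of_mem_monomialSurface hj hz c)
    have hlog_nonpos := Real.log_nonpos (norm_nonneg _) (hz.1 (Fin.castAdd n c))
    rw [abs_of_nonneg (by linarith)]
    linarith

theorem chart_chartCoords {δ ρ : ℝ} {z : Fin (m + n) → ℂ} (hj : ∀ b, 0 < j b) (hδ : 0 < δ)
    (hz : z ∈ monomialSurface m n j δ) (ha : ‖z (Fin.castAdd n a)‖ ≤ ρ) :
    chart j a ρ (-Real.log δ) (chartCoords a ρ z) = z := by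
  have hpos : ∀ b, 0 < ‖z (Fin.castAdd n b)‖ := fun b =>
    hδ.trans_le (le_norm_of_mem_monomialSurface hj hz b)
  have hρ : ρ ≠ 0 := ((hpos a).trans_le ha).ne'
  funext d
  refine Fin.addCases (fun b => ?_) (fun c => ?_) d
  · simp only [chart, Fin.append_left]
    split_ifs with hb
    · subst hb
      have hexp : chartExponent j b (-Real.log δ) (fun c => chartCoords b ρ z (.inr (.inr c)))
          = Real.log ‖z (Fin.castAdd n b)‖ := by
        have hsum := sum_mul_log_norm_of_mem_monomialSurface hj hδ hz
        rw [Fintype.sum_eq_add_sum_subtype_ne _ b] at hsum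
        simp only [chartExponent, chartCoords, Sum.elim_inr, mul_neg, Finset.sum_neg_distrib]
        field_simp [(hj b).ne']
        linarith
      rw [hexp, Real.exp_log (hpos b), min_eq_right ha]
      simp only [chartCoords, Sum.elim_inl, if_pos, mul_div_cancel_left₀ _ hρ,
        norm_mul_exp_arg_mul_I]
    · simp only [chartCoords, Sum.elim_inl, Sum.elim_inr, if_neg hb, neg_neg,
        Real.exp_log (hpos b), min_eq_right (hz.1 _), norm_mul_exp_arg_mul_I]
  · simp only [chart, Fin.append_right, chartCoords, Sum.elim_inl, Sum.elim_inr, Complex.eta]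

theorem abs_chartExponent_sub_le (hj : ∀ b, 0 < j b) (L : ℝ) {u v : {c // c ≠ a} → ℝ} {D : ℝ}
    (hD : 0 ≤ D) (huv : ∀ c, |u c - v c| ≤ D) :
    |chartExponent j a L u - chartExponent j a L v| ≤ (∑ b, (j b : ℝ)) * D := by
  have hjsum : ∑ c : {c // c ≠ a}, (j c : ℝ) ≤ ∑ b, (j b : ℝ) := by
    rw [Fintype.sum_eq_add_sum_subtype_ne (fun b => (j b : ℝ)) a]
    exact le_add_of_nonneg_left (Nat.cast_nonneg _)
  have hja : (1 : ℝ) ≤ j a := by exact_mod_cast hj a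
  rw [chartExponent, chartExponent, ← sub_div, abs_div, Nat.abs_cast, div_le_iff₀ (by positivity)]
  calc _ = |∑ c : {c // c ≠ a}, (j c : ℝ) * (u c - v c)| := by
        simp only [mul_sub, Finset.sum_sub_distrib]; ring_nf
    _ ≤ ∑ c : {c // c ≠ a}, (j c : ℝ) * D := by
        refine (Finset.abs_sum_le_sum_abs _ _).trans (Finset.sum_le_sum fun c _ => ?_)
        rw [abs_mul, Nat.abs_cast]
        exact mul_le_mul_of_nonneg_left (huv c) (Nat.cast_nonneg _)
    _ ≤ (∑ b, (j b : ℝ)) * D * 1 := by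
        rw [← Finset.sum_mul, mul_one]
        exact mul_le_mul_of_nonneg_right hjsum hD
    _ ≤ (∑ b, (j b : ℝ)) * D * j a := by gcongr

theorem lipschitzWith_chart (hj : ∀ b, 0 < j b) {ρ : ℝ} (hρ₀ : 0 < ρ) (hρ₁ : ρ ≤ 1) (L : ℝ) :
    LipschitzWith ((∑ b, j b : ℕ) + 2) (chart (n := n) j a ρ L) := by
  refine LipschitzWith.of_dist_le_mul fun p q => ?_
  set D := dist p q
  have hcoord : ∀ i, |p i - q i| ≤ D := fun i => by
    rw [← Real.dist_eq]; exact dist_le_pi_dist p q i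
  have hD : 0 ≤ D := dist_nonneg
  have hJ : (0 : ℝ) ≤ ∑ b, (j b : ℝ) := by positivity
  push_cast
  rw [dist_pi_le_iff (by positivity)]
  intro d
  refine Fin.addCases (fun b => ?_) (fun c => ?_) d
  · simp only [chart, Fin.append_left]
    split_ifs with hb
    · subst hb
      refine (dist_ofReal_mul_exp_le _ _ _ _ (le_min hρ₀.le (Real.exp_pos _).le)).trans ?_
      rw [Real.dist_eq, Real.dist_eq, ← sub_div, abs_div, abs_of_pos hρ₀]
      have hradius := (Real.abs_min_exp_sub_min_exp_le hρ₀ _ _).trans (mul_le_mul_of_nonneg_left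
        (abs_chartExponent_sub_le j b hj L hD fun c => hcoord (.inr (.inr c))) hρ₀.le)
      have hangle : min ρ (Real.exp (chartExponent j b L fun c => q (.inr (.inr c)))) *
          (|p (.inl b) - q (.inl b)| / ρ) ≤ D := by
        rw [mul_div_assoc', div_le_iff₀ hρ₀, mul_comm D]
        exact mul_le_mul (min_le_left _ _) (hcoord _) (abs_nonneg _) hρ₀.le
      nlinarith [mul_nonneg (sub_nonneg.2 hρ₁) (mul_nonneg hJ hD)]
    · refine (dist_ofReal_mul_exp_le _ _ _ _ (le_min zero_le_one (Real.exp_pos _).le)).trans ?_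
      have hradius := Real.abs_min_exp_sub_min_exp_le one_pos (-p (.inr (.inr ⟨b, hb⟩)))
        (-q (.inr (.inr ⟨b, hb⟩)))
      rw [neg_sub_neg, abs_sub_comm (q _), one_mul] at hradius
      have hangle := mul_le_of_le_one_left (abs_nonneg (p (.inl b) - q (.inl b)))
        (min_le_left 1 (Real.exp (-q (.inr (.inr ⟨b, hb⟩)))))
      rw [Real.dist_eq, Real.dist_eq]
      linarith [hcoord (.inr (.inr ⟨b, hb⟩)), hcoord (.inl b), mul_nonneg hJ hD]
  · simp only [chart, Fin.append_right, dist_eq]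
    refine (norm_le_abs_re_add_abs_im _).trans ?_
    simp only [sub_re, sub_im]
    linarith [hcoord (.inr (.inl (.inl c))), hcoord (.inr (.inl (.inr c))), mul_nonneg hJ hD]

end Chart

section Cover

variable {m n : ℕ} {j : Fin m → ℕ} {δ : ℝ}

theorem monomialSurface_subset_iUnion_image_chart (hm : 0 < m) (hj : ∀ b, 0 < j b) (hδ : 0 < δ) :
    monomialSurface m n j δ ⊆
      ⋃ a, chart j a (Real.exp (Real.log δ / ∑ b, (j b : ℝ))) (-Real.log δ) ''
        chartBox a (Real.exp (Real.log δ / ∑ b, (j b : ℝ))) (-Real.log δ) := by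
  intro z hz
  obtain ⟨a, ha⟩ := exists_log_norm_le_of_mem_monomialSurface hm hj hδ hz
  have hpos := hδ.trans_le (le_norm_of_mem_monomialSurface hj hz a)
  exact mem_iUnion.2 ⟨a, chartCoords a _ z,
    chartCoords_mem_chartBox j a hj hδ (Real.exp_pos _).le hz,
    chart_chartCoords j a hj hδ hz ((Real.log_le_iff_le_exp hpos).1 ha)⟩

theorem hausdorffMeasure_monomialSurface_le (hm : 0 < m) (hj : ∀ b, 0 < j b) (hδ₀ : 0 < δ)
    (hδ₁ : δ ≤ 1) :
    μH[2 * (m + n) - 1] (monomialSurface m n j δ) ≤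
      ENNReal.ofReal (m * (∑ b, (j b : ℝ) + 2) ^ (2 * (m + n) - 1 : ℝ) *
        (2 * (Real.pi * Real.exp (Real.log δ / ∑ b, (j b : ℝ)))) *
        (2 * (-Real.log δ + 4)) ^ (2 * (m + n) - 2)) := by
  set ρ := Real.exp (Real.log δ / ∑ b, (j b : ℝ))
  set L := -Real.log δ
  have hρ₁ : ρ ≤ 1 := by
    refine Real.exp_le_one_iff.2 (div_nonpos_of_nonpos_of_nonneg (Real.log_nonpos hδ₀.le hδ₁) ?_)
    positivity
  have hL : 0 ≤ L := neg_nonneg.2 (Real.log_nonpos hδ₀.le hδ₁)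
  have hdim₀ : (0 : ℝ) ≤ 2 * (m + n) - 1 := by
    have : (1 : ℝ) ≤ m := by exact_mod_cast hm
    linarith [n.cast_nonneg (α := ℝ)]
  have hdim : ∀ a : Fin m, (2 * (m + n) - 1 : ℝ) = Fintype.card (ChartIndex m n a) := fun a => by
    rw [card_chartIndex, Nat.cast_sub (by omega)]
    push_cast; ring
  calc μH[2 * (m + n) - 1] (monomialSurface m n j δ)
      ≤ ∑ a, μH[2 * (m + n) - 1] (chart j a ρ L '' chartBox a ρ L) :=
        (measure_mono (monomialSurface_subset_iUnion_image_chart hm hj hδ₀)).trans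
          (measure_iUnion_fintype_le _ _)
    _ ≤ ∑ a : Fin m, (((∑ b, j b : ℕ) + 2 : ℝ≥0) : ℝ≥0∞) ^ (2 * (m + n) - 1 : ℝ) *
          volume (chartBox (n := n) a ρ L) := by
        refine Finset.sum_le_sum fun a _ => ?_
        refine ((lipschitzWith_chart j a hj (Real.exp_pos _) hρ₁ L).hausdorffMeasure_image_le
          hdim₀ _).trans ?_
        rw [hdim a, hausdorffMeasure_pi_real]
    _ = _ := by
        simp only [volume_chartBox, Finset.sum_const, Finset.card_univ, Fintype.card_fin,
          nsmul_eq_mul]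
        rw [eq_comm, ENNReal.ofReal_mul (by positivity), ENNReal.ofReal_mul (by positivity),
          ENNReal.ofReal_mul (by positivity), ENNReal.ofReal_natCast,
          ENNReal.ofReal_pow (by positivity), ← ENNReal.ofReal_rpow_of_nonneg (by positivity) hdim₀]
        have hC : ENNReal.ofReal (∑ b, (j b : ℝ) + 2) = (((∑ b, j b : ℕ) + 2 : ℝ≥0) : ℝ≥0∞) := by
          rw [← ENNReal.ofReal_coe_nnreal]; push_cast; rfl
        rw [hC]
        ring

theorem norm_setIntegral_monomialSurface_le {E : Type*} [NormedAddCommGroup E] [NormedSpace ℝ E]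
    (hm : 0 < m) (hj : ∀ b, 0 < j b) (hδ₀ : 0 < δ) (hδ₁ : δ ≤ 1)
    {f : (Fin (m + n) → ℂ) → E} {M : ℝ} (hM : 0 ≤ M)
    (hf : ∀ z ∈ monomialSurface m n j δ, ‖f z‖ ≤ M) :
    ‖∫ z in monomialSurface m n j δ, f z ∂μH[2 * (m + n) - 1]‖ ≤
      M * (m * (∑ b, (j b : ℝ) + 2) ^ (2 * (m + n) - 1 : ℝ) *
        (2 * (Real.pi * Real.exp (Real.log δ / ∑ b, (j b : ℝ)))) *
        (2 * (-Real.log δ + 4)) ^ (2 * (m + n) - 2)) := by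
  have hμ := hausdorffMeasure_monomialSurface_le (n := n) hm hj hδ₀ hδ₁
  have hL : 0 ≤ -Real.log δ := neg_nonneg.2 (Real.log_nonpos hδ₀.le hδ₁)
  refine (norm_setIntegral_le_of_norm_le_const (hμ.trans_lt ENNReal.ofReal_lt_top) hf).trans
    (mul_le_mul_of_nonneg_left (ENNReal.toReal_le_of_le_ofReal ?_ hμ) hM)
  exact mul_nonneg (by positivity) (pow_nonneg (by linarith) _)

end Cover

theorem surface_integral_tendsto_zero_general
    (m n : ℕ) (hm : 0 < m)
    (k : Fin m → ℕ) (j : Fin m → ℕ) (hj : ∀ a, 0 < j a)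
    (φ ω : (Fin (m + n) → ℂ) → ℂ)
    (Cφ Cω : ℝ)
    (hφbd : ∀ z, ‖φ z‖ ≤ Cφ)   -- φ ∈ L^∞
    (hωbd : ∀ z, ‖ω z‖ ≤ Cω)   -- bounded density of the form w.r.t. Hausdorff measure
    :
    Tendsto
      (fun δ : ℝ =>
        ∫ z in {z : Fin (m + n) → ℂ |
            (∀ a, ‖z a‖ ≤ 1) ∧
            ‖∏ a : Fin m, (z (Fin.castAdd n a)) ^ (j a)‖ = δ},
          φ z *
            (∏ a : Fin m,
              ((Real.log (Complex.normSq (z (Fin.castAdd n a))) : ℂ)) ^ (k a))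
            * ω z
          ∂(MeasureTheory.Measure.hausdorffMeasure (2 * (m + n) - 1 : ℝ)))
      (𝓝[>] (0:ℝ)) (𝓝 0) := by
  set J := ∑ b, (j b : ℝ)
  set N := ∑ b, k b + (2 * (m + n) - 2)
  have hJ : 0 < J := Finset.sum_pos (fun b _ => Nat.cast_pos.2 (hj b)) ⟨⟨0, hm⟩, Finset.mem_univ _⟩
  set A := Cφ * Cω * (m * (J + 2) ^ (2 * (m + n) - 1 : ℝ) * (2 * Real.pi)) * 2 ^ N
  have hlim : Tendsto (fun δ => A * ((-Real.log δ + 4) ^ N * Real.exp (Real.log δ / J)))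
      (𝓝[>] 0) (𝓝 0) := by
    simpa using (tendsto_neg_log_add_pow_mul_exp_log_div_nhdsGT_zero N 4 hJ).const_mul A
  refine squeeze_zero_norm' ?_ hlim
  filter_upwards [Ioo_mem_nhdsGT one_pos] with δ ⟨hδ₀, hδ₁⟩
  have hL : 0 ≤ -Real.log δ := neg_nonneg.2 (Real.log_nonpos hδ₀.le hδ₁.le)
  have hCφ : 0 ≤ Cφ := (norm_nonneg _).trans (hφbd 0)
  have hCω : 0 ≤ Cω := (norm_nonneg _).trans (hωbd 0)
  refine (norm_setIntegral_monomialSurface_le hm hj hδ₀ hδ₁.le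
    (M := Cφ * (2 * -Real.log δ) ^ (∑ b, k b) * Cω)
    (mul_nonneg (mul_nonneg hCφ (pow_nonneg (by linarith) _)) hCω) fun z hz => ?_).trans ?_
  · rw [norm_mul, norm_mul]
    gcongr
    exacts [hφbd z, norm_prod_log_normSq_pow_le_of_mem_monomialSurface hj hδ₀ hz k, hωbd z]
  calc _ ≤ Cφ * (2 * (-Real.log δ + 4)) ^ (∑ b, k b) * Cω *
        (m * (J + 2) ^ (2 * (m + n) - 1 : ℝ) * (2 * (Real.pi * Real.exp (Real.log δ / J))) *
          (2 * (-Real.log δ + 4)) ^ (2 * (m + n) - 2)) := by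
        gcongr
        linarith
    _ = _ := by
        simp only [A, N, mul_pow, pow_add]
        ring

theorem surface_integral_tendsto_zero
    (m n : ℕ) (hm : 0 < m)
    (k : Fin m → ℕ) (j : Fin m → ℕ) (hj : ∀ a, 0 < j a)
    (i : Fin m)
    (φ ω : (Fin (m + n) → ℂ) → ℂ)
    (hφmeas : Measurable φ) (hωmeas : Measurable ω)
    (Cφ Cω : ℝ)
    (hφbd : ∀ z, ‖φ z‖ ≤ Cφ)   -- φ ∈ L^∞
    (hωbd : ∀ z, ‖ω z‖ ≤ Cω)   -- bounded density of the form w.r.t. Hausdorff measure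
    :
    Tendsto
      (fun δ : ℝ =>
        ∫ z in {z : Fin (m + n) → ℂ |
            (∀ a, ‖z a‖ ≤ 1) ∧
            ‖∏ a : Fin m, (z (Fin.castAdd n a)) ^ (j a)‖ = δ},
          φ z *
            (∏ a : Fin m,
              ((Real.log (Complex.normSq (z (Fin.castAdd n a))) : ℂ)) ^ (k a))
            * ω z
          ∂(MeasureTheory.Measure.hausdorffMeasure (2 * (m + n) - 1 : ℝ)))
      (𝓝[>] (0:ℝ)) (𝓝 0) :=
  surface_integral_tendsto_zero_general m n hm k j hj φ ω Cφ Cω hφbd hωbd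
end

section
/- For $m \geq 1$, $r \geq 0$, and $\mathbf{r} = (r_1,\dots,r_m) \in \mathbb{R}_{>0}^m$, define $E^{\mathbf{r}}_\delta = \{(\rho_2,\dots,\rho_m) \in \mathbb{R}_{\geq 0}^{m-1} : \delta \leq \prod_{s=2}^m \rho_s^{r_s} \leq 1,\ \sup_s \rho_s \leq 1\}$. Then $\lim_{\delta \to 0} \delta^{1/r_1}(\ln\delta)^r \int_{E^{\mathbf{r}}_\delta} \prod_{s=2}^m \rho_s^{1 - r_s/r_1}\, d\rho_2 \cdots d\rho_m = 0$. -/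
open scoped Topology
open Set MeasureTheory Filter Finset

/-!
Write `P = ∏ ρ_s ^ r_s` and pick `0 < ε ≤ 1 / r₁` with `ε r_s ≤ 1` for all `s`. Splitting
`ρ_s ^ (1 - r_s / r₁) = ρ_s ^ (1 - ε r_s) · (ρ_s ^ r_s) ^ (ε - 1 / r₁)`, the first factors are at
most `1` on the unit cube and the second product is `P ^ (ε - 1 / r₁) ≤ δ ^ (ε - 1 / r₁)` on the
region, whose volume is at most `1`. Hence the quantity is bounded by `δ ^ ε |ln δ| ^ r`, which
tends to `0` because powers of the logarithm are negligible against any positive power of `δ`.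
-/

lemma tendsto_rpow_mul_abs_log_rpow_nhdsGT_zero {ε : ℝ} (hε : 0 < ε) (r : ℝ) :
    Tendsto (fun x : ℝ => x ^ ε * |Real.log x| ^ r) (𝓝[>] 0) (𝓝 0) :=
  (isLittleO_abs_log_rpow_rpow_nhdsGT_zero r (neg_lt_zero.2 hε)).tendsto_div_nhds_zero.congr'
    (eventually_mem_nhdsWithin.mono fun x (hx : 0 < x) => by
      rw [Real.rpow_neg hx.le, div_inv_eq_mul, mul_comm])

lemma exists_pos_le_and_forall_mul_le_one {ι : Type*} [Finite ι] (r : ι → ℝ) {a : ℝ}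
    (ha : 0 < a) : ∃ ε > 0, ε ≤ a ∧ ∀ i, ε * r i ≤ 1 := by
  have hsmall : ∀ i, ∀ᶠ ε in 𝓝 (0 : ℝ), ε * r i ≤ 1 := fun i =>
    ((continuous_id.mul continuous_const).tendsto' 0 0 (zero_mul _)).eventually
      (eventually_le_nhds zero_lt_one)
  have hnear : ∀ᶠ ε in 𝓝[>] (0 : ℝ), 0 < ε ∧ ε ≤ a ∧ ∀ i, ε * r i ≤ 1 :=
    eventually_mem_nhdsWithin.and <| nhdsWithin_le_nhds <|
      (eventually_le_nhds ha).and (eventually_all.2 hsmall)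
  exact hnear.exists

lemma pos_of_le_prod_rpow {ι : Type*} {s : Finset ι} {ρ r : ι → ℝ} {δ : ℝ} (hδ : 0 < δ)
    (hP : δ ≤ ∏ i ∈ s, ρ i ^ r i) {i : ι} (hi : i ∈ s) (hρ : 0 ≤ ρ i) (hr : r i ≠ 0) :
    0 < ρ i := by
  refine hρ.lt_of_ne fun h => ?_
  have hzero : ∏ i ∈ s, ρ i ^ r i = 0 :=
    prod_eq_zero hi (by rw [← h, Real.zero_rpow hr])
  linarith

lemma prod_rpow_one_sub_div_le {ι : Type*} {s : Finset ι} {ρ r : ι → ℝ} {b δ ε : ℝ}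
    (hρ : ∀ i ∈ s, 0 < ρ i ∧ ρ i ≤ 1) (hδ : 0 < δ) (hP : δ ≤ ∏ i ∈ s, ρ i ^ r i)
    (hεb : ε ≤ 1 / b) (hεr : ∀ i ∈ s, ε * r i ≤ 1) :
    ∏ i ∈ s, ρ i ^ (1 - r i / b) ≤ δ ^ (ε - 1 / b) := by
  have hsplit : ∏ i ∈ s, ρ i ^ (1 - r i / b)
      = (∏ i ∈ s, ρ i ^ (1 - ε * r i)) * (∏ i ∈ s, ρ i ^ r i) ^ (ε - 1 / b) := by
    rw [← Real.finsetProd_rpow _ _ (fun i hi => (Real.rpow_pos_of_pos (hρ i hi).1 _).le),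
      ← prod_mul_distrib]
    refine prod_congr rfl fun i hi => ?_
    rw [← Real.rpow_mul (hρ i hi).1.le, ← Real.rpow_add (hρ i hi).1]
    ring_nf
  have hfirst : ∏ i ∈ s, ρ i ^ (1 - ε * r i) ≤ 1 :=
    prod_le_one (fun i hi => (Real.rpow_pos_of_pos (hρ i hi).1 _).le)
      (fun i hi => Real.rpow_le_one (hρ i hi).1.le (hρ i hi).2 (by linarith [hεr i hi]))
  calc ∏ i ∈ s, ρ i ^ (1 - r i / b)
      ≤ 1 * δ ^ (ε - 1 / b) := by
        rw [hsplit]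
        exact mul_le_mul hfirst (Real.rpow_le_rpow_of_nonpos hδ hP (by linarith))
          (Real.rpow_nonneg (prod_nonneg fun i hi => (Real.rpow_pos_of_pos (hρ i hi).1 _).le) _)
          zero_le_one
    _ = δ ^ (ε - 1 / b) := one_mul _

lemma norm_setIntegral_le_of_measure_le_one {α E : Type*} [MeasurableSpace α]
    [NormedAddCommGroup E] [NormedSpace ℝ E] {μ : Measure α} {s : Set α} {f : α → E} {C : ℝ}
    (hs : μ s ≤ 1) (hC : 0 ≤ C) (hf : ∀ x ∈ s, ‖f x‖ ≤ C) : ‖∫ x in s, f x ∂μ‖ ≤ C :=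
  (norm_setIntegral_le_of_norm_le_const (hs.trans_lt ENNReal.one_lt_top) hf).trans
    (mul_le_of_le_one_right hC (ENNReal.toReal_le_of_le_ofReal zero_le_one (by simpa using hs)))

lemma volume_le_one_of_subset_unitCube {ι : Type*} [Fintype ι] {E : Set (ι → ℝ)}
    (hE : ∀ ρ ∈ E, ∀ i, 0 ≤ ρ i ∧ ρ i ≤ 1) : volume E ≤ 1 :=
  calc volume E ≤ volume (Icc (0 : ι → ℝ) 1) :=
        measure_mono fun ρ hρ => ⟨fun i => (hE ρ hρ i).1, fun i => (hE ρ hρ i).2⟩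
    _ = 1 := by simp [Real.volume_Icc_pi]

theorem radial_region_estimate
    (k : ℕ) (rr : ℕ) (r1 : ℝ) (hr1 : 0 < r1)
    (r : Fin k → ℝ) (hr : ∀ s, 0 < r s) :
    Filter.Tendsto
      (fun δ : ℝ =>
        δ ^ (1 / r1) * (Real.log δ) ^ rr *
          ∫ ρ in {ρ : Fin k → ℝ |
              (∀ s, 0 ≤ ρ s ∧ ρ s ≤ 1) ∧
              δ ≤ ∏ s, (ρ s) ^ (r s) ∧ (∏ s, (ρ s) ^ (r s)) ≤ 1},
            ∏ s, (ρ s) ^ (1 - r s / r1) ∂volume)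
      (𝓝[>] (0:ℝ)) (𝓝 0) := by
  obtain ⟨ε, hε, hεr1, hεr⟩ := exists_pos_le_and_forall_mul_le_one r (one_div_pos.2 hr1)
  refine squeeze_zero_norm' ?_ (tendsto_rpow_mul_abs_log_rpow_nhdsGT_zero hε rr)
  filter_upwards [self_mem_nhdsWithin] with δ (hδ : 0 < δ)
  calc _ ≤ δ ^ (1 / r1) * |Real.log δ| ^ rr * δ ^ (ε - 1 / r1) := by
        rw [norm_mul, norm_mul, norm_pow, Real.norm_eq_abs, Real.norm_eq_abs,
          abs_of_pos (Real.rpow_pos_of_pos hδ _)]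
        gcongr
        refine norm_setIntegral_le_of_measure_le_one
          (volume_le_one_of_subset_unitCube fun ρ hρ => hρ.1) (by positivity) ?_
        rintro ρ ⟨hρ, hδρ, -⟩
        have hpos : ∀ s, 0 < ρ s := fun s =>
          pos_of_le_prod_rpow hδ hδρ (mem_univ s) (hρ s).1 (hr s).ne'
        rw [Real.norm_of_nonneg (prod_nonneg fun s _ => (Real.rpow_pos_of_pos (hpos s) _).le)]
        exact prod_rpow_one_sub_div_le (fun s _ => ⟨hpos s, (hρ s).2⟩) hδ hδρ hεr1 fun s _ => hεr s
    _ = δ ^ ε * |Real.log δ| ^ (rr : ℝ) := by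
        rw [Real.rpow_natCast, mul_right_comm, ← Real.rpow_add hδ, add_sub_cancel]
end
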